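/- arXiv:1404.0434 — 2 statements merged into one kernel-verified Lean document; each statement's English description precedes it below -/
import Mathlib

section
/- Let q ≥ 2 be a prime power and define π(q) = ∏_{i=1}^∞ (1 − q^{−i}). For all integers a, u, v, w with 0 ≤ a ≤ min{u, v}, v ≤ u, and u ≤ w (so that all quantities are defined), one has N₃(w,u,v,a) ≤ π(q)^{−1} · q^{u(u−a)} · q^{(v−a)(w−v)}. -/
/-- `V_I = {x ∈ F^n : i ∉ I → x i = 0}` -/
noncomputable def VI (F : Type) [Field F] (n : ℕ) (I : Finset (Fin n)) :
    Submodule F (Fin n → F) :=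
  Submodule.pi (↑I)ᶜ (fun _ => (⊥ : Submodule F F))

/-- the `t`-th relative generalized Hamming weight of `C₂ ⊆ C₁ ⊆ F^n` -/
noncomputable def RGHW (F : Type) [Field F] {n : ℕ} (t : ℕ)
    (C₁ C₂ : Submodule F (Fin n → F)) : ℕ :=
  sInf {d : ℕ | ∃ I : Finset (Fin n), I.card = d ∧
    Module.finrank F ↥(C₁ ⊓ VI F n I) ≥ Module.finrank F ↥(C₂ ⊓ VI F n I) + t}

/-- `π(q) = ∏_{i=1}^∞ (1 - q^{-i})` -/
noncomputable def piq (q : ℝ) : ℝ := ∏' i : ℕ, (1 - (q ^ (i + 1))⁻¹)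

/-- `N₁(w,u) = ∏_{i=0}^{u-1}(q^w - q^i) / ∏_{i=0}^{u-1}(q^u - q^i)` -/
noncomputable def N1 (q : ℝ) (w u : ℕ) : ℝ :=
  (∏ i ∈ Finset.range u, (q ^ w - q ^ i)) / (∏ i ∈ Finset.range u, (q ^ u - q ^ i))

/-- `N₂(w,u,v) = ∏_{i=0}^{v-1}(q^w - q^{u+i}) / ∏_{i=0}^{v-1}(q^v - q^i)` -/
noncomputable def N2 (q : ℝ) (w u v : ℕ) : ℝ :=
  (∏ i ∈ Finset.range v, (q ^ w - q ^ (u + i))) / (∏ i ∈ Finset.range v, (q ^ v - q ^ i))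

/-- `N₃(w,u,v,a) = N₁(u,a) · N₂(w-a, u-a, v-a)` -/
noncomputable def N3 (q : ℝ) (w u v a : ℕ) : ℝ :=
  N1 q u a * N2 q (w - a) (u - a) (v - a)

/-!
Write `F(m) = ∏_{j<m} (q^{j+1} - 1)`. Both `∏_{i<a} (q^u - q^i)` and `∏_{i<a} (q^a - q^i)` equal
`q^{a(a-1)/2}` times a quotient of values of `F`, so `N₁(u,a) = F(u) / (F(a) F(u-a))` is the
Gaussian binomial coefficient and is symmetric in `a ↔ u - a`. For `q ≥ 2` the denominator of
`N₁(u,u-a)` is at least `1` and its numerator at most `q^{u(u-a)}`. In `N₂(W,U,V)` the numerator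
is at most `q^{WV}` (or vanishes), while the denominator is
`q^{V²} ∏_{i=1}^{V} (1 - q^{-i}) ≥ q^{V²} π(q)`.
-/

open Finset

section InfiniteProduct

variable {q : ℝ}

lemma one_sub_inv_pow_pos (hq : 1 < q) (i : ℕ) : 0 < 1 - (q ^ (i + 1))⁻¹ :=
  sub_pos.2 (inv_lt_one_of_one_lt₀ (one_lt_pow₀ hq i.succ_ne_zero))

lemma summable_log_one_sub_inv_pow (hq : 1 < q) :
    Summable fun i : ℕ => Real.log (1 - (q ^ (i + 1))⁻¹) := by
  have hgeom : Summable fun i : ℕ => (q ^ (i + 1))⁻¹ := by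
    have := (summable_geometric_of_lt_one (inv_nonneg.2 (by linarith))
      (inv_lt_one_of_one_lt₀ hq)).mul_right q⁻¹
    simpa only [pow_succ, mul_inv, inv_pow] using this
  simpa only [← sub_eq_add_neg] using Real.summable_log_one_add_of_summable hgeom.neg

lemma piq_pos (hq : 1 < q) : 0 < piq q := by
  rw [piq, ← Real.rexp_tsum_eq_tprod (one_sub_inv_pow_pos hq) (summable_log_one_sub_inv_pow hq)]
  exact Real.exp_pos _

lemma piq_le_prod_range (hq : 1 < q) (n : ℕ) :
    piq q ≤ ∏ i ∈ range n, (1 - (q ^ (i + 1))⁻¹) := by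
  have hprod := (Real.multipliable_of_summable_log (one_sub_inv_pow_pos hq)
    (summable_log_one_sub_inv_pow hq)).hasProd
  refine Antitone.le_of_tendsto (antitone_nat_of_succ_le fun m => ?_) hprod.tendsto_prod_nat n
  rw [prod_range_succ]
  exact mul_le_of_le_one_right (prod_nonneg fun i _ => (one_sub_inv_pow_pos hq i).le)
    (sub_le_self _ (by positivity))

end InfiniteProduct

section Products

variable {ι : Type*} {q : ℝ}

lemma prod_pow_sub_pow_nonneg {s : Finset ι} {e : ι → ℕ} {w : ℕ} (hq : 1 ≤ q)
    (he : ∀ i ∈ s, e i ≤ w) : 0 ≤ ∏ i ∈ s, (q ^ w - q ^ e i) :=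
  prod_nonneg fun i hi => sub_nonneg.2 (pow_le_pow_right₀ hq (he i hi))

lemma prod_pow_sub_pow_le {s : Finset ι} {e : ι → ℕ} {w : ℕ} (hq : 1 ≤ q)
    (he : ∀ i ∈ s, e i ≤ w) : ∏ i ∈ s, (q ^ w - q ^ e i) ≤ q ^ (w * #s) := by
  rw [pow_mul, ← prod_const]
  exact prod_le_prod (fun i hi => sub_nonneg.2 (pow_le_pow_right₀ hq (he i hi)))
    fun i _ => sub_le_self _ (by positivity)

lemma one_le_prod_range_pow_sub_pow (hq : 2 ≤ q) (n : ℕ) :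
    1 ≤ ∏ i ∈ range n, (q ^ n - q ^ i) := by
  refine one_le_prod fun i hi => ?_
  have hle : q ^ (i + 1) ≤ q ^ n := pow_le_pow_right₀ (by linarith) (mem_range.1 hi)
  have hone : 1 ≤ q ^ i := one_le_pow₀ (by linarith)
  nlinarith [pow_succ q i]

lemma prod_range_pow_sub_pow_eq (hq : q ≠ 0) (n : ℕ) :
    ∏ i ∈ range n, (q ^ n - q ^ i) = q ^ (n * n) * ∏ i ∈ range n, (1 - (q ^ (i + 1))⁻¹) := by
  rw [← prod_range_reflect (fun i => 1 - (q ^ (i + 1))⁻¹), pow_mul,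
    show (q ^ n) ^ n = ∏ _i ∈ range n, q ^ n by rw [prod_const, card_range], ← prod_mul_distrib]
  refine prod_congr rfl fun i hi => ?_
  have hsplit : q ^ n = q ^ i * q ^ (n - 1 - i + 1) := by
    rw [← pow_add]; congr 1; have := mem_range.1 hi; omega
  rw [hsplit]
  field_simp

end Products

section GaussianBinomial

variable {q : ℝ}

def prodPowSubOne (q : ℝ) (m : ℕ) : ℝ := ∏ j ∈ range m, (q ^ (j + 1) - 1)

lemma prodPowSubOne_pos (hq : 1 < q) (m : ℕ) : 0 < prodPowSubOne q m :=
  prod_pos fun j _ => sub_pos.2 (one_lt_pow₀ hq j.succ_ne_zero)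

lemma prod_range_pow_sub_pow_mul_prodPowSubOne {u a : ℕ} (h : a ≤ u) :
    (∏ i ∈ range a, (q ^ u - q ^ i)) * prodPowSubOne q (u - a) =
      q ^ a.choose 2 * prodPowSubOne q u := by
  induction a with
  | zero => simp
  | succ a ih =>
    have hsplit : prodPowSubOne q (u - a) = prodPowSubOne q (u - (a + 1)) * (q ^ (u - a) - 1) := by
      rw [prodPowSubOne, prodPowSubOne, show u - a = u - (a + 1) + 1 by omega, prod_range_succ]
    have hfactor : q ^ u - q ^ a = q ^ a * (q ^ (u - a) - 1) := by
      rw [mul_sub, ← pow_add, Nat.add_sub_cancel' (by omega), mul_one]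
    rw [prod_range_succ, hfactor, Nat.choose_succ_succ', Nat.choose_one_right]
    linear_combination q ^ a * ih (by omega) - q ^ a * (∏ i ∈ range a, (q ^ u - q ^ i)) * hsplit

lemma N1_eq_div (hq : 1 < q) {u a : ℕ} (h : a ≤ u) :
    N1 q u a = prodPowSubOne q u / (prodPowSubOne q a * prodPowSubOne q (u - a)) := by
  have hu := prod_range_pow_sub_pow_mul_prodPowSubOne (q := q) h
  have ha := prod_range_pow_sub_pow_mul_prodPowSubOne (q := q) (le_refl a)
  rw [Nat.sub_self, prodPowSubOne, prod_range_zero, mul_one] at ha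
  have hden : ∏ i ∈ range a, (q ^ a - q ^ i) ≠ 0 := by
    rw [ha]; exact mul_ne_zero (by positivity) (prodPowSubOne_pos hq a).ne'
  rw [N1, div_eq_div_iff hden
    (mul_pos (prodPowSubOne_pos hq a) (prodPowSubOne_pos hq (u - a))).ne', ha]
  linear_combination prodPowSubOne q a * hu

lemma N1_pos (hq : 1 < q) {u a : ℕ} (h : a ≤ u) : 0 < N1 q u a := by
  rw [N1_eq_div hq h]
  exact div_pos (prodPowSubOne_pos hq u)
    (mul_pos (prodPowSubOne_pos hq a) (prodPowSubOne_pos hq (u - a)))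

lemma N1_sub (hq : 1 < q) {u a : ℕ} (h : a ≤ u) : N1 q u (u - a) = N1 q u a := by
  rw [N1_eq_div hq h, N1_eq_div hq (Nat.sub_le u a), Nat.sub_sub_self h, mul_comm]

lemma N1_le_pow_mul (hq : 2 ≤ q) {u b : ℕ} (h : b ≤ u) : N1 q u b ≤ q ^ (u * b) := by
  have hle : ∀ i ∈ range b, i ≤ u := fun i hi => (mem_range.1 hi).le.trans h
  calc N1 q u b ≤ ∏ i ∈ range b, (q ^ u - q ^ i) :=
        div_le_self (prod_pow_sub_pow_nonneg (by linarith) hle)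
          (one_le_prod_range_pow_sub_pow hq b)
    _ ≤ q ^ (u * b) := by
        simpa only [card_range] using prod_pow_sub_pow_le (by linarith) hle

lemma N1_le_pow_mul_sub (hq : 2 ≤ q) {u a : ℕ} (h : a ≤ u) : N1 q u a ≤ q ^ (u * (u - a)) := by
  rw [← N1_sub (by linarith) h]
  exact N1_le_pow_mul hq (Nat.sub_le u a)

end GaussianBinomial

section BoundN2

variable {q : ℝ} {W U V : ℕ}

lemma N2_eq_zero (hUW : U ≤ W) (h : W < U + V) : N2 q W U V = 0 := by
  rw [N2, prod_eq_zero (i := W - U) (mem_range.2 (by omega))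
    (by rw [Nat.add_sub_cancel' hUW, sub_self]), zero_div]

lemma N2_le (hq : 1 < q) (hUW : U ≤ W) : N2 q W U V ≤ (piq q)⁻¹ * q ^ (V * (W - V)) := by
  have hpiq := piq_pos hq
  rcases lt_or_ge W (U + V) with hlt | hge
  · rw [N2_eq_zero hUW hlt]
    positivity
  have hle : ∀ i ∈ range V, U + i ≤ W := fun i hi => by have := mem_range.1 hi; omega
  have hnum : ∏ i ∈ range V, (q ^ W - q ^ (U + i)) ≤ q ^ (V * (W - V)) * q ^ (V * V) := by
    rw [← pow_add, ← mul_add, Nat.sub_add_cancel (by omega), mul_comm]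
    simpa only [card_range] using prod_pow_sub_pow_le (e := fun i => U + i) hq.le hle
  calc N2 q W U V
      = (∏ i ∈ range V, (q ^ W - q ^ (U + i))) /
          (q ^ (V * V) * ∏ i ∈ range V, (1 - (q ^ (i + 1))⁻¹)) := by
        rw [N2, prod_range_pow_sub_pow_eq (by positivity)]
    _ ≤ q ^ (V * (W - V)) * q ^ (V * V) / (q ^ (V * V) * piq q) :=
        div_le_div₀ (by positivity) hnum (by positivity)
          (mul_le_mul_of_nonneg_left (piq_le_prod_range hq V) (by positivity))
    _ = (piq q)⁻¹ * q ^ (V * (W - V)) := by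
        field_simp

end BoundN2

theorem N3_bound_general (q : ℕ) (hq2 : 2 ≤ q)
    (w u v a : ℕ) (hau : a ≤ u) (hav : a ≤ v) (huw : u ≤ w) :
    N3 (q : ℝ) w u v a ≤
      (piq (q : ℝ))⁻¹ * (q : ℝ) ^ (u * (u - a)) * (q : ℝ) ^ ((v - a) * (w - v)) := by
  have hq : (2 : ℝ) ≤ q := by exact_mod_cast hq2
  have hN1 := N1_le_pow_mul_sub hq hau
  have hN2 := N2_le (q := (q : ℝ)) (V := v - a) (by linarith) (Nat.sub_le_sub_right huw a)
  rw [Nat.sub_sub_sub_cancel_right hav] at hN2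
  calc N3 (q : ℝ) w u v a = N1 q u a * N2 q (w - a) (u - a) (v - a) := rfl
    _ ≤ (q : ℝ) ^ (u * (u - a)) * ((piq (q : ℝ))⁻¹ * (q : ℝ) ^ ((v - a) * (w - v))) :=
        mul_le_mul_of_nonneg hN1 hN2 (N1_pos (by linarith) hau).le
          (mul_nonneg (inv_nonneg.2 (piq_pos (by linarith)).le) (by positivity))
    _ = _ := by ring

/-- Upper bound on `N₃(w,u,v,a)`. -/
theorem N3_bound (q : ℕ) (hq2 : 2 ≤ q) (hq : ∃ p k : ℕ, p.Prime ∧ 1 ≤ k ∧ q = p ^ k)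
    (w u v a : ℕ) (hau : a ≤ u) (hav : a ≤ v) (hvu : v ≤ u) (huw : u ≤ w) :
    N3 (q : ℝ) w u v a ≤
      (piq (q : ℝ))⁻¹ * (q : ℝ) ^ (u * (u - a)) * (q : ℝ) ^ ((v - a) * (w - v)) :=
  N3_bound_general q hq2 w u v a hau hav huw
end

section
/- (Singleton bound for RGHW) Let q be a prime power and let C2 ⊆ C1 ⊆ F_q^n be nested linear codes. For every integer t with 1 ≤ t ≤ dim C1 − dim C2, it holds that M_t(C1, C2) + dim C1 ≤ n + t. -/
/-!
Grow a set `I` of coordinates with `C₂ ⊓ V_I = ⊥` one coordinate at a time: while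
`dim C₂ + |I| < n`, the direct sum `C₂ ⊕ V_I` is proper, so it misses some unit vector `eᵢ`,
and adding `i` to `I` keeps the intersection trivial. Stop at `|I| = n - dim C₁ + t`; the
dimension formula then gives `dim (C₁ ⊓ V_I) ≥ dim C₁ + |I| - n = t`, so `I` witnesses
`M_t(C₁, C₂) ≤ n - dim C₁ + t`.
-/

open Module Submodule

lemma exists_single_notMem_of_ne_top {R ι : Type*} [Semiring R] [Finite ι] [DecidableEq ι]
    {W : Submodule R (ι → R)} (hW : W ≠ ⊤) : ∃ i, Pi.single i 1 ∉ W := by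
  by_contra! h
  refine hW (eq_top_iff.mpr ?_)
  rw [← (Pi.basisFun R ι).span_eq, span_le]
  rintro _ ⟨i, rfl⟩
  simpa using h i

section VI

variable {F : Type} [Field F] {n : ℕ}

lemma finrank_le_length (W : Submodule F (Fin n → F)) : finrank F W ≤ n :=
  W.finrank_le.trans_eq (finrank_fin_fun F)

lemma mem_VI {I : Finset (Fin n)} {v : Fin n → F} : v ∈ VI F n I ↔ ∀ i ∉ I, v i = 0 := by
  simp [VI, Submodule.mem_pi]

lemma VI_eq_iInf_ker_proj (I : Finset (Fin n)) :
    VI F n I = ⨅ i ∈ (↑I : Set (Fin n))ᶜ, LinearMap.ker (LinearMap.proj i) := by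
  ext v
  simp [mem_VI]

lemma finrank_VI (I : Finset (Fin n)) : finrank F (VI F n I) = I.card := by
  classical
  rw [VI_eq_iInf_ker_proj, (LinearMap.iInfKerProjEquiv F (fun _ => F) disjoint_compl_right
    (by simp)).finrank_eq]
  simp

lemma VI_insert_le (i : Fin n) (S : Finset (Fin n)) :
    VI F n (insert i S) ≤ VI F n S ⊔ span F {Pi.single i 1} := by
  intro v hv
  rw [mem_VI] at hv
  have hrest : v - v i • Pi.single i 1 ∈ VI F n S := by
    rw [mem_VI]
    intro j hj
    by_cases hji : j = i
    · subst hji; simp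
    · simp [hji, hv j (by simp [hji, hj])]
  simpa using add_mem_sup hrest (smul_mem _ (v i) (mem_span_singleton_self (Pi.single i 1)))

lemma exists_disjoint_VI_insert {C : Submodule F (Fin n → F)} {S : Finset (Fin n)}
    (hS : Disjoint C (VI F n S)) (hlt : finrank F C + S.card < n) :
    ∃ i ∉ S, Disjoint C (VI F n (insert i S)) := by
  have hsup : C ⊔ VI F n S ≠ ⊤ := by
    intro htop
    have hsum := finrank_sup_add_finrank_inf_eq C (VI F n S)
    rw [htop, finrank_top, finrank_fin_fun, hS.eq_bot, finrank_bot, finrank_VI] at hsum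
    omega
  obtain ⟨i, hi⟩ := exists_single_notMem_of_ne_top hsup
  have hiS : i ∉ S := fun h =>
    hi (mem_sup_right (mem_VI.mpr fun j hj => by simp [show j ≠ i by rintro rfl; exact hj h]))
  refine ⟨i, hiS, Disjoint.mono_right (VI_insert_le i S) ?_⟩
  exact hS.disjoint_sup_right_of_disjoint_sup_left
    ((disjoint_span_singleton' (by simp)).mpr hi)

lemma exists_card_eq_disjoint_VI (C : Submodule F (Fin n → F)) :
    ∀ m, finrank F C + m ≤ n → ∃ I : Finset (Fin n), I.card = m ∧ Disjoint C (VI F n I)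
  | 0, _ => ⟨∅, rfl, by simp [VI]⟩
  | m + 1, hm => by
    obtain ⟨S, rfl, hS⟩ := exists_card_eq_disjoint_VI C m (by omega)
    obtain ⟨i, hiS, hi⟩ := exists_disjoint_VI_insert hS (by omega)
    exact ⟨insert i S, Finset.card_insert_of_notMem hiS, hi⟩

lemma le_finrank_inf_VI (C : Submodule F (Fin n → F)) (I : Finset (Fin n)) :
    finrank F C + I.card ≤ n + finrank F ↥(C ⊓ VI F n I) := by
  have hsum := finrank_sup_add_finrank_inf_eq C (VI F n I)
  have hsup := finrank_le_length (C ⊔ VI F n I)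
  rw [finrank_VI] at hsum
  omega

lemma RGHW_le_card {t : ℕ} {C₁ C₂ : Submodule F (Fin n → F)} {I : Finset (Fin n)}
    (hI : finrank F ↥(C₂ ⊓ VI F n I) + t ≤ finrank F ↥(C₁ ⊓ VI F n I)) :
    RGHW F t C₁ C₂ ≤ I.card :=
  Nat.sInf_le ⟨I, rfl, hI⟩

end VI

theorem rghw_singleton_bound_general (F : Type) [Field F] (n : ℕ)
    (C₁ C₂ : Submodule F (Fin n → F)) (hC : C₂ ≤ C₁) (t : ℕ)
    (ht2 : t ≤ Module.finrank F C₁ - Module.finrank F C₂) :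
    RGHW F t C₁ C₂ + Module.finrank F C₁ ≤ n + t := by
  have hk₂ : finrank F C₂ + t ≤ finrank F C₁ := by
    have := Submodule.finrank_mono hC
    omega
  have hk₁ := finrank_le_length C₁
  obtain ⟨I, hIcard, hI⟩ := exists_card_eq_disjoint_VI C₂ (n - finrank F C₁ + t) (by omega)
  have hC₁I := le_finrank_inf_VI C₁ I
  have hRGHW : RGHW F t C₁ C₂ ≤ I.card :=
    RGHW_le_card (by rw [hI.eq_bot, finrank_bot]; omega)
  omega

/-- Singleton bound for relative generalized Hamming weight. -/
theorem rghw_singleton_bound (F : Type) [Field F] [Fintype F] (n : ℕ)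
    (C₁ C₂ : Submodule F (Fin n → F)) (hC : C₂ ≤ C₁) (t : ℕ)
    (ht1 : 1 ≤ t) (ht2 : t ≤ Module.finrank F C₁ - Module.finrank F C₂) :
    RGHW F t C₁ C₂ + Module.finrank F C₁ ≤ n + t :=
  rghw_singleton_bound_general F n C₁ C₂ hC t ht2
end
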